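/- arXiv:2008.00486 — 12 statements merged into one kernel-verified Lean document; each statement's English description precedes it below -/
import Mathlib

section
/- Let C be a pointed regular category and let f : X ⟶ Z and g : Y ⟶ Z be morphisms, with image factorizations f = e_f ≫ m_f and g = e_g ≫ m_g where e_f, e_g are regular epimorphisms and m_f, m_g are monomorphisms. Then f and g are disjoint if and only if m_f and m_g are disjoint. -/
open CategoryTheory CategoryTheory.Limits

universe v u

variable {C : Type u} [Category.{v} C]

/-- Two morphisms `f : X ⟶ Z` and `g : Y ⟶ Z` in a pointed category are *disjoint*
if whenever `x ≫ f = y ≫ g` then both composites are zero. -/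
def CategoryTheory.AreDisjoint [HasZeroMorphisms C]
    {X Y Z : C} (f : X ⟶ Z) (g : Y ⟶ Z) : Prop :=
  ∀ ⦃S : C⦄ (x : S ⟶ X) (y : S ⟶ Y), x ≫ f = y ≫ g → x ≫ f = 0 ∧ y ≫ g = 0

/-- Two morphisms `f : X ⟶ Z` and `g : Y ⟶ Z` *commute in the sense of Huq* if there
is a cooperator `ρ : X ⨯ Y ⟶ Z` restricting to `f` and `g` along the product inclusions. -/
def CategoryTheory.HuqCommute [HasZeroMorphisms C] [HasBinaryProducts C]
    {X Y Z : C} (f : X ⟶ Z) (g : Y ⟶ Z) : Prop :=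
  ∃ ρ : X ⨯ Y ⟶ Z, prod.lift (𝟙 X) 0 ≫ ρ = f ∧ prod.lift 0 (𝟙 Y) ≫ ρ = g

/-- A pointed category with binary products is *anticommutative* if every pair of
commuting morphisms is disjoint. -/
def CategoryTheory.Anticommutative (C : Type u) [Category.{v} C]
    [HasZeroMorphisms C] [HasBinaryProducts C] : Prop :=
  ∀ ⦃X Y Z : C⦄ (f : X ⟶ Z) (g : Y ⟶ Z), HuqCommute f g → AreDisjoint f g

/-- `C` is a regular category: finitely complete, has coequalizers of kernel pairs,
and regular epimorphisms are stable under pullback. -/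
structure CategoryTheory.IsRegularCategory (C : Type u) [Category.{v} C] : Prop where
  hasFiniteLimits : HasFiniteLimits C
  hasCoeqOfKernelPairs : ∀ ⦃X Y : C⦄ (f : X ⟶ Y),
    HasCoequalizer (pullback.fst f f) (pullback.snd f f)
  regularEpiStable : ∀ ⦃P X Y Z : C⦄ (p₁ : P ⟶ X) (p₂ : P ⟶ Y) (f : X ⟶ Z) (g : Y ⟶ Z),
    IsPullback p₁ p₂ f g → RegularEpi g → Nonempty (RegularEpi p₁)

/-- In a pointed regular category, morphisms `f` and `g` are disjoint iff the
monomorphism parts `m_f` and `m_g` of their image factorizations are disjoint. -/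
theorem disjoint_iff_images_disjoint [HasZeroObject C] [HasZeroMorphisms C]
    [HasFiniteLimits C] (hreg : IsRegularCategory C)
    {X Y Z If Ig : C} (f : X ⟶ Z) (g : Y ⟶ Z)
    (ef : X ⟶ If) (mf : If ⟶ Z) (hfac : ef ≫ mf = f)
    (hef : RegularEpi ef) (hmf : Mono mf)
    (eg : Y ⟶ Ig) (mg : Ig ⟶ Z) (hgac : eg ≫ mg = g)
    (heg : RegularEpi eg) (hmg : Mono mg) :
    AreDisjoint f g ↔ AreDisjoint mf mg := by
  constructor
  · intro h S s t hst
    -- pull back ef along s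
    let P := pullback s ef
    let p : P ⟶ S := pullback.fst s ef
    let q : P ⟶ X := pullback.snd s ef
    obtain ⟨hp⟩ := hreg.regularEpiStable p q s ef (IsPullback.of_hasPullback s ef) hef
    -- pull back eg along p ≫ t
    let P' := pullback (p ≫ t) eg
    let p' : P' ⟶ P := pullback.fst (p ≫ t) eg
    let q' : P' ⟶ Y := pullback.snd (p ≫ t) eg
    obtain ⟨hp'⟩ := hreg.regularEpiStable p' q' (p ≫ t) eg
      (IsPullback.of_hasPullback (p ≫ t) eg) heg
    have hcond : p ≫ s = q ≫ ef := pullback.condition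
    have hcond' : p' ≫ (p ≫ t) = q' ≫ eg := pullback.condition
    have key : (p' ≫ q) ≫ f = q' ≫ g := by
      rw [← hfac, ← hgac]
      have e1 := hcond =≫ mf
      have e2 := hcond' =≫ mg
      simp only [Category.assoc] at e1 e2 ⊢
      rw [← e1, hst, e2]
    obtain ⟨h1, h2⟩ := h (p' ≫ q) q' key
    have e1 : Epi (p' ≫ p) := by
      have := hp.epi; have := hp'.epi; exact epi_comp p' p
    have hs : (p' ≫ p) ≫ s ≫ mf = 0 := by
      have e := hcond =≫ mf
      simp only [Category.assoc] at e ⊢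
      rw [e, ← Category.assoc, hfac]
      simpa using h1
    have ht : (p' ≫ p) ≫ t ≫ mg = 0 := by rw [← hst]; exact hs
    constructor
    · exact (cancel_epi (p' ≫ p)).mp (by rw [hs]; simp)
    · exact (cancel_epi (p' ≫ p)).mp (by rw [ht]; simp)
  · intro h S x y hxy
    have hxy' : (x ≫ ef) ≫ mf = (y ≫ eg) ≫ mg := by
      simpa [hfac, hgac] using hxy
    obtain ⟨h1, h2⟩ := h (x ≫ ef) (y ≫ eg) hxy'
    constructor
    · rw [← hfac, ← Category.assoc]; exact h1
    · rw [← hgac, ← Category.assoc]; exact h2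
end

section
/- Let C be a pointed category with binary products. (a) If C is anticommutative, then every central morphism of C is a zero morphism. (b) If every central morphism of C is a zero morphism, then every commutative object of C is a zero object. -/
open CategoryTheory CategoryTheory.Limits

universe v u

variable {C : Type u} [Category.{v} C]

/-- A morphism `f : X ⟶ Y` is *central* if it commutes with `𝟙 Y`. -/
def CategoryTheory.IsCentral [HasZeroMorphisms C] [HasBinaryProducts C]
    {X Y : C} (f : X ⟶ Y) : Prop :=
  HuqCommute f (𝟙 Y)

/-- An object `M` is *commutative* if `𝟙 M` is central. -/
def CategoryTheory.IsCommutativeObject [HasZeroMorphisms C] [HasBinaryProducts C]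
    (M : C) : Prop :=
  IsCentral (𝟙 M)

/-- (a) In an anticommutative pointed category with binary products, every central morphism
is zero; (b) if every central morphism is zero, then every commutative object is a zero
object. -/
theorem anticommutative_implications [HasZeroObject C] [HasZeroMorphisms C]
    [HasBinaryProducts C] :
    (Anticommutative C → ∀ ⦃X Y : C⦄ (f : X ⟶ Y), IsCentral f → f = 0) ∧
    ((∀ ⦃X Y : C⦄ (f : X ⟶ Y), IsCentral f → f = 0) →
      ∀ (M : C), IsCommutativeObject M → IsZero M) := by
  constructor
  · intro hAC X Y f hf
    have hd := hAC f (𝟙 Y) hf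
    have := hd (𝟙 X) f (by simp)
    simpa using this.1
  · intro h M hM
    rw [IsZero.iff_id_eq_zero]
    exact h (𝟙 M) hM
end

section
/- Let C be a pointed regular category which is unital. Then the following are equivalent: (i) C is anticommutative; (ii) every central morphism of C is a zero morphism; (iii) every commutative object of C is a zero object. -/
open CategoryTheory CategoryTheory.Limits

universe v u

variable {C : Type u} [Category.{v} C]

/-- A pointed finitely complete category is *unital* if the product inclusions are
jointly strongly epimorphic: every monomorphism into a binary product through which
both product inclusions factor is an isomorphism. -/
def CategoryTheory.IsUnital (C : Type u) [Category.{v} C]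
    [HasZeroMorphisms C] [HasBinaryProducts C] : Prop :=
  ∀ ⦃A B M : C⦄ (m : M ⟶ A ⨯ B), Mono m →
    (∃ j₁ : A ⟶ M, j₁ ≫ m = prod.lift (𝟙 A) 0) →
    (∃ j₂ : B ⟶ M, j₂ ≫ m = prod.lift 0 (𝟙 B)) →
    IsIso m

/-!
If `f` and `g` commute and `x ≫ f = y ≫ g =: h`, then `h` commutes with itself, so it suffices
to show that a self-commuting `h` vanishes. Write `h = e ≫ m` with `e` a regular epi and `m` a
mono. As the product inclusions are jointly strongly epic, a cooperator of `h` with itself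
factors through `m`, so `e` commutes with itself. Cooperators descend along `e ⨯ 𝟙` and
`𝟙 ⨯ e`, which are regular epis as pullbacks of `e`; hence the image of `h` is a commutative
object, i.e. a zero object.
-/

namespace CategoryTheory

section HuqCommute

variable [HasZeroMorphisms C] [HasBinaryProducts C]

lemma HuqCommute.symm {X Y Z : C} {f : X ⟶ Z} {g : Y ⟶ Z} (h : HuqCommute f g) :
    HuqCommute g f := by
  obtain ⟨ρ, hρ₁, hρ₂⟩ := h
  refine ⟨(prod.braiding Y X).hom ≫ ρ, ?_, ?_⟩
  · rw [← hρ₂, ← Category.assoc]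
    congr 1
    ext <;> simp [prod.lift_fst, prod.lift_snd]
  · rw [← hρ₁, ← Category.assoc]
    congr 1
    ext <;> simp [prod.lift_fst, prod.lift_snd]

lemma lift_id_zero_comp_prodMap {X X' Y Y' : C} (x : X ⟶ X') (y : Y ⟶ Y') :
    prod.lift (𝟙 X) 0 ≫ prod.map x y = x ≫ prod.lift (𝟙 X') 0 := by
  ext <;> simp [prod.lift_fst, prod.lift_snd]

lemma lift_zero_id_comp_prodMap {X X' Y Y' : C} (x : X ⟶ X') (y : Y ⟶ Y') :
    prod.lift 0 (𝟙 Y) ≫ prod.map x y = y ≫ prod.lift 0 (𝟙 Y') := by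
  ext <;> simp [prod.lift_fst, prod.lift_snd]

lemma HuqCommute.precomp {X Y Z X' Y' : C} {f : X ⟶ Z} {g : Y ⟶ Z} (h : HuqCommute f g)
    (x : X' ⟶ X) (y : Y' ⟶ Y) : HuqCommute (x ≫ f) (y ≫ g) := by
  obtain ⟨ρ, hρ₁, hρ₂⟩ := h
  exact ⟨prod.map x y ≫ ρ, by rw [reassoc_of% lift_id_zero_comp_prodMap, hρ₁],
    by rw [reassoc_of% lift_zero_id_comp_prodMap, hρ₂]⟩

end HuqCommute

section Unital

variable [HasZeroMorphisms C] [HasFiniteLimits C]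

lemma IsUnital.prod_hom_ext (huni : IsUnital C) {A B T : C} {u v : A ⨯ B ⟶ T}
    (h₁ : prod.lift (𝟙 A) 0 ≫ u = prod.lift (𝟙 A) 0 ≫ v)
    (h₂ : prod.lift 0 (𝟙 B) ≫ u = prod.lift 0 (𝟙 B) ≫ v) : u = v := by
  have : IsIso (equalizer.ι u v) :=
    huni _ inferInstance ⟨equalizer.lift _ h₁, equalizer.lift_ι _ _⟩
      ⟨equalizer.lift _ h₂, equalizer.lift_ι _ _⟩
  exact eq_of_epi_equalizer

lemma HuqCommute.of_comp_mono (huni : IsUnital C) {X Y I Z : C} {f : X ⟶ I} {g : Y ⟶ I}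
    {m : I ⟶ Z} [Mono m] (h : HuqCommute (f ≫ m) (g ≫ m)) : HuqCommute f g := by
  obtain ⟨ρ, hρ₁, hρ₂⟩ := h
  have : IsIso (pullback.fst ρ m) :=
    huni _ inferInstance ⟨pullback.lift _ f hρ₁, pullback.lift_fst _ _ _⟩
      ⟨pullback.lift _ g hρ₂, pullback.lift_fst _ _ _⟩
  have hfac : (inv (pullback.fst ρ m) ≫ pullback.snd ρ m) ≫ m = ρ := by
    simp [← pullback.condition]
  refine ⟨inv (pullback.fst ρ m) ≫ pullback.snd ρ m, ?_, ?_⟩ <;>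
    rw [← cancel_mono m, Category.assoc, hfac]
  exacts [hρ₁, hρ₂]

end Unital

section Regular

lemma IsRegularCategory.isRegularEpi_of_isPullback (hreg : IsRegularCategory C)
    {P X Y Z : C} {p₁ : P ⟶ X} {p₂ : P ⟶ Y} {f : X ⟶ Z} {g : Y ⟶ Z}
    (hP : IsPullback p₁ p₂ f g) [IsRegularEpi g] : IsRegularEpi p₁ :=
  ⟨hreg.regularEpiStable _ _ _ _ hP (IsRegularEpi.getStruct g)⟩

variable [HasFiniteLimits C]

lemma IsRegularCategory.exists_epi_cover (hreg : IsRegularCategory C) {S I T : C}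
    (e : S ⟶ I) [IsRegularEpi e] (x : T ⟶ I) :
    ∃ (Q : C) (q : Q ⟶ T) (s : Q ⟶ S), Epi q ∧ q ≫ x = s ≫ e := by
  have := hreg.isRegularEpi_of_isPullback (IsPullback.of_hasPullback x e)
  exact ⟨_, pullback.fst x e, pullback.snd x e, inferInstance, pullback.condition⟩

lemma IsRegularCategory.exists_isRegularEpi_mono_fac (hreg : IsRegularCategory C)
    {S Z : C} (h : S ⟶ Z) :
    ∃ (I : C) (e : S ⟶ I) (m : I ⟶ Z), IsRegularEpi e ∧ Mono m ∧ e ≫ m = h := by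
  have := hreg.hasCoeqOfKernelPairs h
  have hem := coequalizer.π_desc h (pullback.condition (f := h) (g := h))
  refine ⟨_, _, _, inferInstance, ⟨fun {T} x y hxy => ?_⟩, hem⟩
  set e := coequalizer.π (pullback.fst h h) (pullback.snd h h)
  -- Lift `x` and `y` along `e` over an epic cover; the lifts agree after `h`, hence after `e`.
  obtain ⟨Q, q, s, _, hs⟩ := hreg.exists_epi_cover e x
  obtain ⟨R, r, t, _, ht⟩ := hreg.exists_epi_cover e (q ≫ y)
  have hst : (r ≫ s) ≫ h = t ≫ h := by
    rw [← hem, Category.assoc, ← reassoc_of% hs, ← reassoc_of% ht, hxy]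
  have hst' : (r ≫ s) ≫ e = t ≫ e := by
    simpa [pullback.lift_fst_assoc, pullback.lift_snd_assoc] using
      pullback.lift _ _ hst ≫= coequalizer.condition (pullback.fst h h) (pullback.snd h h)
  rw [← cancel_epi (r ≫ q), Category.assoc, hs, ← Category.assoc, hst', ← ht, Category.assoc]

lemma isPullback_prodMap_id {A B : C} (e : A ⟶ B) (Y : C) :
    IsPullback (prod.map e (𝟙 Y)) prod.fst prod.fst e :=
  (IsPullback.of_iso_pullback ⟨by simp⟩ (pullbackProdFstIsoProd e Y).symm (by simp)
    (by simp [pullbackProdFstIsoProd, pullback.lift_snd])).flip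

lemma exists_kernelPair_prodMap_lift {A B Y W : C} (e : A ⟶ B) {u v : W ⟶ A ⨯ Y}
    (huv : u ≫ prod.map e (𝟙 Y) = v ≫ prod.map e (𝟙 Y)) :
    ∃ k : W ⟶ pullback e e ⨯ Y,
      k ≫ prod.map (pullback.fst e e) (𝟙 Y) = u ∧ k ≫ prod.map (pullback.snd e e) (𝟙 Y) = v := by
  have hfst : (u ≫ prod.fst) ≫ e = (v ≫ prod.fst) ≫ e := by simpa using huv =≫ prod.fst
  have hsnd : u ≫ prod.snd = v ≫ prod.snd := by simpa using huv =≫ prod.snd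
  refine ⟨prod.lift (pullback.lift _ _ hfst) (u ≫ prod.snd), ?_, ?_⟩ <;>
    ext <;> simp [prod.lift_fst, prod.lift_snd, pullback.lift_fst, pullback.lift_snd, hsnd]

variable [HasZeroMorphisms C]

lemma HuqCommute.of_regularEpi_comp_left (hreg : IsRegularCategory C) (huni : IsUnital C)
    {A B Y Z : C} {e : A ⟶ B} [IsRegularEpi e] {f : B ⟶ Z} {g : Y ⟶ Z}
    (h : HuqCommute (e ≫ f) g) : HuqCommute f g := by
  obtain ⟨ρ, hρ₁, hρ₂⟩ := h
  have := hreg.isRegularEpi_of_isPullback (isPullback_prodMap_id e Y)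
  have hker : prod.map (pullback.fst e e) (𝟙 Y) ≫ ρ = prod.map (pullback.snd e e) (𝟙 Y) ≫ ρ :=
    huni.prod_hom_ext
      (by simp only [reassoc_of% lift_id_zero_comp_prodMap, hρ₁, pullback.condition_assoc])
      (by simp only [reassoc_of% lift_zero_id_comp_prodMap, Category.id_comp])
  have hdesc : ∀ {W : C} (u v : W ⟶ A ⨯ Y),
      u ≫ prod.map e (𝟙 Y) = v ≫ prod.map e (𝟙 Y) → u ≫ ρ = v ≫ ρ := fun u v huv => by
    obtain ⟨k, rfl, rfl⟩ := exists_kernelPair_prodMap_lift e huv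
    simp only [Category.assoc, hker]
  set ψ := EffectiveEpi.desc (prod.map e (𝟙 Y)) ρ hdesc
  have hψ : prod.map e (𝟙 Y) ≫ ψ = ρ := EffectiveEpi.fac _ _ _
  refine ⟨ψ, ?_, ?_⟩
  · rw [← cancel_epi e, ← hρ₁, ← hψ, reassoc_of% lift_id_zero_comp_prodMap]
  · rw [← hρ₂, ← hψ, reassoc_of% lift_zero_id_comp_prodMap, Category.id_comp]

lemma HuqCommute.of_regularEpi_comp_right (hreg : IsRegularCategory C) (huni : IsUnital C)
    {X A B Z : C} {e : A ⟶ B} [IsRegularEpi e] {f : X ⟶ Z} {g : B ⟶ Z}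
    (h : HuqCommute f (e ≫ g)) : HuqCommute f g :=
  (h.symm.of_regularEpi_comp_left hreg huni).symm

lemma HuqCommute.eq_zero_of_self (hreg : IsRegularCategory C) (huni : IsUnital C)
    (hcomm : ∀ M : C, IsCommutativeObject M → IsZero M) {S Z : C} {h : S ⟶ Z}
    (hh : HuqCommute h h) : h = 0 := by
  obtain ⟨I, e, m, _, _, rfl⟩ := hreg.exists_isRegularEpi_mono_fac h
  have he : HuqCommute (e ≫ 𝟙 I) (e ≫ 𝟙 I) := by simpa using hh.of_comp_mono huni
  have hI : IsCommutativeObject I :=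
    (he.of_regularEpi_comp_left hreg huni).of_regularEpi_comp_right hreg huni
  rw [(hcomm I hI).eq_of_src m 0, comp_zero]

end Regular

end CategoryTheory

theorem anticommutative_tfae_of_regular_unital_general [HasZeroMorphisms C]
    [HasFiniteLimits C] (hreg : IsRegularCategory C) (huni : IsUnital C) :
    List.TFAE [Anticommutative C,
      ∀ ⦃X Y : C⦄ (f : X ⟶ Y), IsCentral f → f = 0,
      ∀ (M : C), IsCommutativeObject M → IsZero M] := by
  tfae_have 1 → 2 := fun hanti X Y f hf => by
    simpa using (hanti f (𝟙 Y) hf (𝟙 X) f (by simp)).1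
  tfae_have 2 → 3 := fun hcentral M hM => (IsZero.iff_id_eq_zero M).mpr (hcentral (𝟙 M) hM)
  tfae_have 3 → 1 := fun hcomm X Y Z f g hfg S x y hxy => by
    have hself : HuqCommute (x ≫ f) (x ≫ f) := by simpa only [← hxy] using hfg.precomp x y
    have hzero := hself.eq_zero_of_self hreg huni hcomm
    exact ⟨hzero, hxy ▸ hzero⟩
  tfae_finish

/-- For a pointed regular unital category the following are equivalent:
(i) `C` is anticommutative; (ii) every central morphism is zero;
(iii) every commutative object is a zero object. -/
theorem anticommutative_tfae_of_regular_unital [HasZeroObject C] [HasZeroMorphisms C]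
    [HasFiniteLimits C] (hreg : IsRegularCategory C) (huni : IsUnital C) :
    List.TFAE [Anticommutative C,
      ∀ ⦃X Y : C⦄ (f : X ⟶ Y), IsCentral f → f = 0,
      ∀ (M : C), IsCommutativeObject M → IsZero M] :=
  anticommutative_tfae_of_regular_unital_general hreg huni
end

section
/- For a pointed category C with binary products, the following four conditions are equivalent: (i) for every morphism ρ : X ⨯ X ⟶ Y, if ι₁ ≫ ρ = ι₂ ≫ ρ then ι₁ ≫ ρ = 0 = ι₂ ≫ ρ, where ι₁ = ⟨𝟙 X, 0⟩ and ι₂ = ⟨0, 𝟙 X⟩; (ii) for every morphism ρ : X ⨯ X ⟶ Y and every morphism x : S ⟶ X, if ⟨x, 0⟩ ≫ ρ = ⟨0, x⟩ ≫ ρ then ⟨x, 0⟩ ≫ ρ = 0 = ⟨0, x⟩ ≫ ρ; (iii) for every morphism ρ : X ⨯ Y ⟶ Z and all morphisms x : S ⟶ X, y : S ⟶ Y, if ⟨x, 0⟩ ≫ ρ = ⟨0, y⟩ ≫ ρ then ⟨x, 0⟩ ≫ ρ = 0 = ⟨0, y⟩ ≫ ρ; (iv) C is anticommutative. -/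
open CategoryTheory CategoryTheory.Limits

universe v u

variable {C : Type u} [Category.{v} C]

/-- Proposition 2.7: the four characterizations of anticommutativity. -/
theorem anticommutative_characterizations [HasZeroObject C] [HasZeroMorphisms C]
    [HasBinaryProducts C] :
    ((∀ ⦃X Y : C⦄ (ρ : X ⨯ X ⟶ Y),
        prod.lift (𝟙 X) 0 ≫ ρ = prod.lift 0 (𝟙 X) ≫ ρ →
        prod.lift (𝟙 X) 0 ≫ ρ = 0 ∧ prod.lift 0 (𝟙 X) ≫ ρ = 0) ↔
      (∀ ⦃X Y S : C⦄ (ρ : X ⨯ X ⟶ Y) (x : S ⟶ X),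
        prod.lift x 0 ≫ ρ = prod.lift 0 x ≫ ρ →
        prod.lift x 0 ≫ ρ = 0 ∧ prod.lift 0 x ≫ ρ = 0)) ∧
    ((∀ ⦃X Y S : C⦄ (ρ : X ⨯ X ⟶ Y) (x : S ⟶ X),
        prod.lift x 0 ≫ ρ = prod.lift 0 x ≫ ρ →
        prod.lift x 0 ≫ ρ = 0 ∧ prod.lift 0 x ≫ ρ = 0) ↔
      (∀ ⦃X Y Z S : C⦄ (ρ : X ⨯ Y ⟶ Z) (x : S ⟶ X) (y : S ⟶ Y),
        prod.lift x 0 ≫ ρ = prod.lift 0 y ≫ ρ →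
        prod.lift x 0 ≫ ρ = 0 ∧ prod.lift 0 y ≫ ρ = 0)) ∧
    ((∀ ⦃X Y Z S : C⦄ (ρ : X ⨯ Y ⟶ Z) (x : S ⟶ X) (y : S ⟶ Y),
        prod.lift x 0 ≫ ρ = prod.lift 0 y ≫ ρ →
        prod.lift x 0 ≫ ρ = 0 ∧ prod.lift 0 y ≫ ρ = 0) ↔
      Anticommutative C) := by
  refine ⟨⟨fun h X Y S ρ x hx => ?_, fun h X Y ρ => h ρ (𝟙 X)⟩,
    ⟨fun h X Y Z S ρ x y hxy => ?_, fun h X Y S ρ x => h ρ x x⟩,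
    ⟨fun h X Y Z f g hc S x y hxy => ?_, fun h X Y Z S ρ x y hxy => ?_⟩⟩
  · have e1 : prod.lift x (0 : S ⟶ X) ≫ ρ =
        prod.lift (𝟙 S) 0 ≫ (prod.map x x ≫ ρ) := by
      simp
    have e2 : prod.lift (0 : S ⟶ X) x ≫ ρ =
        prod.lift 0 (𝟙 S) ≫ (prod.map x x ≫ ρ) := by
      simp
    rw [e1, e2] at hx ⊢
    exact h (prod.map x x ≫ ρ) hx
  · have e1 : prod.lift x (0 : S ⟶ Y) ≫ ρ =
        prod.lift (𝟙 S) (0 : S ⟶ S) ≫ (prod.map x y ≫ ρ) := by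
      simp
    have e2 : prod.lift (0 : S ⟶ X) y ≫ ρ =
        prod.lift (0 : S ⟶ S) (𝟙 S) ≫ (prod.map x y ≫ ρ) := by
      simp
    rw [e1, e2] at hxy ⊢
    exact h (prod.map x y ≫ ρ) (𝟙 S) hxy
  · obtain ⟨ρ, hf, hg⟩ := hc
    have e1 : x ≫ f = prod.lift x 0 ≫ ρ := by
      rw [← hf, ← Category.assoc, prod.comp_lift, Category.comp_id, comp_zero]
    have e2 : y ≫ g = prod.lift 0 y ≫ ρ := by
      rw [← hg, ← Category.assoc, prod.comp_lift, Category.comp_id, comp_zero]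
    rw [e1, e2] at hxy ⊢
    exact h ρ x y hxy
  · have e1 : prod.lift x (0 : S ⟶ Y) ≫ ρ = x ≫ (prod.lift (𝟙 X) 0 ≫ ρ) := by
      rw [← Category.assoc, prod.comp_lift, Category.comp_id, comp_zero]
    have e2 : prod.lift (0 : S ⟶ X) y ≫ ρ = y ≫ (prod.lift 0 (𝟙 Y) ≫ ρ) := by
      rw [← Category.assoc, prod.comp_lift, Category.comp_id, comp_zero]
    rw [e1, e2] at hxy ⊢
    exact h _ _ ⟨ρ, rfl, rfl⟩ x y hxy
end

section
/- A pointed category C with binary products and coequalizers is anticommutative if and only if for every object X of C, letting ι₁ = ⟨𝟙 X, 0⟩ : X ⟶ X ⨯ X and ι₂ = ⟨0, 𝟙 X⟩ : X ⟶ X ⨯ X and q : X ⨯ X ⟶ Q a coequalizer of ι₁ and ι₂, one has ι₁ ≫ q = 0 = ι₂ ≫ q. -/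
open CategoryTheory CategoryTheory.Limits

universe v u

variable {C : Type u} [Category.{v} C]

/-- A pointed category with binary products and coequalizers is anticommutative iff
for every object `X` and every coequalizer `q` of the two product inclusions
`ι₁, ι₂ : X ⟶ X ⨯ X`, both `ι₁ ≫ q` and `ι₂ ≫ q` are zero. -/
theorem anticommutative_iff_coequalizer [HasZeroObject C] [HasZeroMorphisms C]
    [HasBinaryProducts C] [HasCoequalizers C] :
    Anticommutative C ↔
      ∀ (X Q : C) (q : X ⨯ X ⟶ Q)
        (h : prod.lift (𝟙 X) 0 ≫ q = prod.lift 0 (𝟙 X) ≫ q),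
        IsColimit (Cofork.ofπ q h) →
        prod.lift (𝟙 X) 0 ≫ q = 0 ∧ prod.lift 0 (𝟙 X) ≫ q = 0 := by

  constructor
  · intro hA X Q q h _
    simpa using hA _ _ ⟨q, rfl, rfl⟩ (𝟙 _) (𝟙 _) (by simpa using h)
  · intro hC X Y Z f g hfg S x y hxy
    obtain ⟨ρ, hρ1, hρ2⟩ := hfg
    set ι₁ : S ⟶ S ⨯ S := prod.lift (𝟙 S) 0
    set ι₂ : S ⟶ S ⨯ S := prod.lift 0 (𝟙 S)
    have h1 : ι₁ ≫ prod.map x y ≫ ρ = x ≫ f := by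
      rw [← hρ1]
      simp [ι₁, prod.lift_map_assoc]
      rw [← Category.assoc, prod.comp_lift, Category.comp_id, comp_zero]
    have h2 : ι₂ ≫ prod.map x y ≫ ρ = y ≫ g := by
      rw [← hρ2]
      simp [ι₂]
      rw [← Category.assoc, prod.comp_lift, Category.comp_id, comp_zero]
    have hcond : ι₁ ≫ prod.map x y ≫ ρ = ι₂ ≫ prod.map x y ≫ ρ := by
      rw [h1, h2, hxy]
    have hzero := hC S (coequalizer ι₁ ι₂) (coequalizer.π ι₁ ι₂)
      (coequalizer.condition ι₁ ι₂) (coequalizerIsCoequalizer ι₁ ι₂)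
    obtain ⟨t, ht⟩ : ∃ t : coequalizer ι₁ ι₂ ⟶ Z,
        coequalizer.π ι₁ ι₂ ≫ t = prod.map x y ≫ ρ :=
      ⟨coequalizer.desc _ hcond, coequalizer.π_desc _ _⟩
    constructor
    · rw [← h1, ← ht, ← Category.assoc, hzero.1, zero_comp]
    · rw [← h2, ← ht, ← Category.assoc, hzero.2, zero_comp]
end

section
/- Every pointed finitely complete category which satisfies the triangular lemma is anticommutative. -/
open CategoryTheory CategoryTheory.Limits

universe v u

variable {C : Type u} [Category.{v} C]

/-- For an internal relation represented by `r : R₀ ⟶ X ⨯ X` and morphisms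
`x, y : S ⟶ X`, `x R y` means `⟨x, y⟩` factors through `r`. -/
def CategoryTheory.RelFactors [HasBinaryProducts C] {R₀ X : C} (r : R₀ ⟶ X ⨯ X)
    {S : C} (x y : S ⟶ X) : Prop :=
  ∃ u : S ⟶ R₀, u ≫ r = prod.lift x y

/-- `r : R₀ ⟶ X ⨯ X` represents an internal equivalence relation on `X`:
it is a monomorphism and the induced relation on generalized elements is reflexive,
symmetric and transitive. -/
structure CategoryTheory.IsInternalEquivalence [HasBinaryProducts C] {R₀ X : C}
    (r : R₀ ⟶ X ⨯ X) : Prop where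
  mono : Mono r
  refl : ∀ ⦃S : C⦄ (x : S ⟶ X), RelFactors r x x
  symm : ∀ ⦃S : C⦄ (x y : S ⟶ X), RelFactors r x y → RelFactors r y x
  trans : ∀ ⦃S : C⦄ (x y z : S ⟶ X),
    RelFactors r x y → RelFactors r y z → RelFactors r x z

/-- A category with binary products satisfies the *triangular lemma* if for all internal
equivalence relations `R, S, T` on an object `X` with `R ∩ S ≤ T`, whenever
`x R y`, `y S z` and `x T z`, then `y T z`. -/
def CategoryTheory.SatisfiesTriangularLemma (C : Type u) [Category.{v} C]
    [HasBinaryProducts C] : Prop :=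
  ∀ ⦃X R₀ S₀ T₀ : C⦄ (r : R₀ ⟶ X ⨯ X) (s : S₀ ⟶ X ⨯ X) (t : T₀ ⟶ X ⨯ X),
    IsInternalEquivalence r → IsInternalEquivalence s → IsInternalEquivalence t →
    (∀ ⦃W : C⦄ (x y : W ⟶ X), RelFactors r x y → RelFactors s x y → RelFactors t x y) →
    ∀ ⦃W : C⦄ (x y z : W ⟶ X),
      RelFactors r x y → RelFactors s y z → RelFactors t x z → RelFactors t y z


namespace CategoryTheory

section KernelRelation

variable [HasBinaryProducts C] [HasEqualizers C]

noncomputable def kerRel {A B : C} (f : A ⟶ B) :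
    equalizer (prod.fst ≫ f) ((prod.snd : A ⨯ A ⟶ A) ≫ f) ⟶ A ⨯ A :=
  equalizer.ι _ _

lemma relFactors_kerRel_iff {A B : C} (f : A ⟶ B) {S : C} (x y : S ⟶ A) :
    RelFactors (kerRel f) x y ↔ x ≫ f = y ≫ f := by
  constructor
  · rintro ⟨u, hu⟩
    have h := u ≫= equalizer.condition (prod.fst ≫ f) (prod.snd ≫ f)
    rwa [← kerRel, reassoc_of% hu, reassoc_of% hu, prod.lift_fst_assoc, prod.lift_snd_assoc] at h
  · intro hxy
    refine ⟨equalizer.lift (prod.lift x y) ?_, equalizer.lift_ι _ _⟩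
    rwa [prod.lift_fst_assoc, prod.lift_snd_assoc]

lemma isInternalEquivalence_kerRel {A B : C} (f : A ⟶ B) : IsInternalEquivalence (kerRel f) where
  mono := by rw [kerRel]; infer_instance
  refl _ x := (relFactors_kerRel_iff f x x).2 rfl
  symm _ x y hxy := (relFactors_kerRel_iff f y x).2 ((relFactors_kerRel_iff f x y).1 hxy).symm
  trans _ x y z hxy hyz := (relFactors_kerRel_iff f x z).2
    (((relFactors_kerRel_iff f x y).1 hxy).trans ((relFactors_kerRel_iff f y z).1 hyz))

lemma relFactors_kerRel_of_snd_of_fst {X Y Z : C} (ρ : X ⨯ Y ⟶ Z) ⦃W : C⦄ (a b : W ⟶ X ⨯ Y)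
    (hsnd : RelFactors (kerRel prod.snd) a b) (hfst : RelFactors (kerRel prod.fst) a b) :
    RelFactors (kerRel ρ) a b := by
  rw [relFactors_kerRel_iff] at hsnd hfst ⊢
  rw [prod.hom_ext hfst hsnd]

end KernelRelation

/- On `X ⨯ Y`, let `R`, `S`, `T` be the kernel pairs of the projection to `Y`, the projection to
`X` and a cooperator `ρ`; `R ∩ S` is the diagonal, so `R ∩ S ≤ T`. Now `⟨x, 0⟩ R 0 S ⟨0, y⟩`, and
`x ≫ f = y ≫ g` says `⟨x, 0⟩ T ⟨0, y⟩`, so the triangular lemma gives `0 T ⟨0, y⟩`: `y ≫ g = 0`. -/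
lemma SatisfiesTriangularLemma.comp_eq_zero_of_huqCommute [HasZeroMorphisms C]
    [HasBinaryProducts C] [HasEqualizers C] (h : SatisfiesTriangularLemma C)
    {X Y Z : C} {f : X ⟶ Z} {g : Y ⟶ Z} (hfg : HuqCommute f g)
    {S : C} {x : S ⟶ X} {y : S ⟶ Y} (hxy : x ≫ f = y ≫ g) : y ≫ g = 0 := by
  obtain ⟨ρ, hf, hg⟩ := hfg
  have hx : prod.lift x 0 ≫ ρ = x ≫ f := by
    rw [← hf, ← Category.assoc, prod.comp_lift, Category.comp_id, comp_zero]
  have hy : prod.lift 0 y ≫ ρ = y ≫ g := by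
    rw [← hg, ← Category.assoc, prod.comp_lift, Category.comp_id, comp_zero]
  have key := h (kerRel prod.snd) (kerRel prod.fst) (kerRel ρ)
    (isInternalEquivalence_kerRel _) (isInternalEquivalence_kerRel _)
    (isInternalEquivalence_kerRel _) (relFactors_kerRel_of_snd_of_fst ρ)
    (prod.lift x 0) 0 (prod.lift 0 y)
    (by rw [relFactors_kerRel_iff, prod.lift_snd, zero_comp])
    (by rw [relFactors_kerRel_iff, prod.lift_fst, zero_comp])
    (by rw [relFactors_kerRel_iff, hx, hy, hxy])
  rw [relFactors_kerRel_iff, hy, zero_comp] at key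
  exact key.symm

end CategoryTheory

theorem anticommutative_of_triangular_general [HasZeroMorphisms C]
    [HasFiniteLimits C] (h : SatisfiesTriangularLemma C) :
    Anticommutative C := by
  intro X Y Z f g hfg S x y hxy
  have hy := h.comp_eq_zero_of_huqCommute hfg hxy
  exact ⟨hxy.trans hy, hy⟩

/-- Every pointed finitely complete category satisfying the triangular lemma is
anticommutative. -/
theorem anticommutative_of_triangular [HasZeroObject C] [HasZeroMorphisms C]
    [HasFiniteLimits C] (h : SatisfiesTriangularLemma C) :
    Anticommutative C :=
  anticommutative_of_triangular_general h
end

section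
/- Every pointed finitely complete majority category is anticommutative. -/
/-!
Let `ρ` be a cooperator of `f` and `g`, and `t := x ≫ f = y ≫ g`. The triples `(x, 0, t)`,
`(0, y, t)` and `(0, 0, 0)` lie in the graph of `ρ`, an internal ternary relation, so by the
majority property so does `(0, 0, t)`; that is, `t = ρ(0, 0) = 0`.
-/

open CategoryTheory CategoryTheory.Limits

universe v u

variable {C : Type u} [Category.{v} C]

/-- A finitely complete category is a *majority category* if for every internal ternary
relation `r : R₀ ⟶ X ⨯ Y ⨯ Z` and generalized elements as below, whenever
`(x', y, z)`, `(x, y', z)` and `(x, y, z')` all factor through `r`, so does `(x, y, z)`. -/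
def CategoryTheory.IsMajorityCategory (C : Type u) [Category.{v} C]
    [HasBinaryProducts C] : Prop :=
  ∀ ⦃R₀ X Y Z : C⦄ (r : R₀ ⟶ X ⨯ Y ⨯ Z), Mono r →
    ∀ ⦃S : C⦄ (x x' : S ⟶ X) (y y' : S ⟶ Y) (z z' : S ⟶ Z),
      (∃ u : S ⟶ R₀, u ≫ r = prod.lift x' (prod.lift y z)) →
      (∃ u : S ⟶ R₀, u ≫ r = prod.lift x (prod.lift y' z)) →
      (∃ u : S ⟶ R₀, u ≫ r = prod.lift x (prod.lift y z')) →
      ∃ u : S ⟶ R₀, u ≫ r = prod.lift x (prod.lift y z)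

-- `prod.lift_fst` and `prod.lift_snd` are only `@[reassoc]` in Mathlib.
attribute [local simp] prod.lift_fst prod.lift_snd prod.lift_fst_assoc prod.lift_snd_assoc

namespace CategoryTheory

section Graph

variable [HasBinaryProducts C] {X Y Z : C}

noncomputable abbrev graphRel (ρ : X ⨯ Y ⟶ Z) : X ⨯ Y ⟶ X ⨯ Y ⨯ Z :=
  prod.lift prod.fst (prod.lift prod.snd ρ)

instance (ρ : X ⨯ Y ⟶ Z) : IsSplitMono (graphRel ρ) :=
  IsSplitMono.mk' ⟨prod.map (𝟙 X) prod.fst, by ext <;> simp⟩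

theorem exists_comp_graphRel_iff (ρ : X ⨯ Y ⟶ Z) {S : C} (x : S ⟶ X) (y : S ⟶ Y)
    (z : S ⟶ Z) :
    (∃ u : S ⟶ X ⨯ Y, u ≫ graphRel ρ = prod.lift x (prod.lift y z)) ↔
      prod.lift x y ≫ ρ = z := by
  constructor
  · rintro ⟨u, hu⟩
    have hfst : u ≫ prod.fst = x := by simpa using hu =≫ prod.fst
    have hsnd : u ≫ prod.snd = y := by simpa using hu =≫ prod.snd ≫ prod.fst
    have hu_eq : u = prod.lift x y := by ext <;> simp [hfst, hsnd]
    simpa [hu_eq] using hu =≫ prod.snd ≫ prod.snd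
  · rintro rfl
    exact ⟨prod.lift x y, by ext <;> simp⟩

theorem IsMajorityCategory.lift_comp_eq_of_lift_comp_eq (hC : IsMajorityCategory C)
    (ρ : X ⨯ Y ⟶ Z) {S : C} {x x' : S ⟶ X} {y y' : S ⟶ Y}
    (e : prod.lift x' y ≫ ρ = prod.lift x y' ≫ ρ) :
    prod.lift x y ≫ ρ = prod.lift x' y ≫ ρ :=
  (exists_comp_graphRel_iff ρ x y _).1 <| hC (graphRel ρ) inferInstance x x' y y' _ _
    ((exists_comp_graphRel_iff ρ x' y _).2 rfl) ((exists_comp_graphRel_iff ρ x y' _).2 e.symm)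
    ((exists_comp_graphRel_iff ρ x y _).2 rfl)

end Graph

end CategoryTheory

theorem anticommutative_of_majority_general [HasZeroMorphisms C]
    [HasFiniteLimits C] (h : IsMajorityCategory C) :
    Anticommutative C := by
  rintro X Y Z f g ⟨ρ, hf, hg⟩ S x y hxy
  have hx : prod.lift x 0 ≫ ρ = x ≫ f := by simp [← hf, prod.comp_lift_assoc]
  have hy : prod.lift 0 y ≫ ρ = y ≫ g := by simp [← hg, prod.comp_lift_assoc]
  have hρ := h.lift_comp_eq_of_lift_comp_eq ρ (x := 0) (y := 0) (hx.trans (hxy.trans hy.symm))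
  have hzero : x ≫ f = 0 := by
    rw [← hx, ← hρ, show prod.lift (0 : S ⟶ X) (0 : S ⟶ Y) = 0 by ext <;> simp, zero_comp]
  exact ⟨hzero, hxy ▸ hzero⟩

/-- Every pointed finitely complete majority category is anticommutative. -/
theorem anticommutative_of_majority [HasZeroObject C] [HasZeroMorphisms C]
    [HasFiniteLimits C] (h : IsMajorityCategory C) :
    Anticommutative C :=
  anticommutative_of_majority_general h
end

section
/- Let C be a pointed category with binary products and coequalizers which is regularly coextensive, i.e. every object A of C has the property: for every binary product diagram (A, a₁ : A ⟶ X₁, a₂ : A ⟶ X₂), all regular epimorphisms q₁ : X₁ ⟶ Q₁, q : A ⟶ Q, q₂ : X₂ ⟶ Q₂ and all morphisms r₁ : Q ⟶ Q₁, r₂ : Q ⟶ Q₂ with a₁ ≫ q₁ = q ≫ r₁ and a₂ ≫ q₂ = q ≫ r₂, the cone (Q, r₁, r₂) is a binary product diagram if and only if both commuting squares are pushout squares. Then C is anticommutative. -/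
open CategoryTheory CategoryTheory.Limits

universe v u

variable {C : Type u} [Category.{v} C]

/-!
Let `ρ` be a cooperator of `f, g` and `x ≫ f = y ≫ g`, and write `ι₁ = ⟨1, 0⟩`, `ι₂ = ⟨0, 1⟩`.
Let `q` be the coequalizer of `u = x ≫ ι₁` and `v = y ≫ ι₂`, through which
`ρ` factors. Pushing `q` out along the projections gives the coequalizers of `u ≫ πᵢ, v ≫ πᵢ`;
by coextensivity the pushed-out maps exhibit the codomain of `q` as a product. In each component
one of `u ≫ πᵢ`, `v ≫ πᵢ` vanishes, so `u ≫ q = v ≫ q` vanishes componentwise, hence is zero,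
and so are `x ≫ f = u ≫ ρ` and `y ≫ g = v ≫ ρ`.
-/

namespace CategoryTheory.Limits.coequalizer

variable [HasCoequalizers C] {S A X : C}

noncomputable def compMap (a : A ⟶ X) (u v : S ⟶ A) :
    coequalizer u v ⟶ coequalizer (u ≫ a) (v ≫ a) :=
  desc (a ≫ π _ _) (by simpa using condition (u ≫ a) (v ≫ a))

lemma π_compMap (a : A ⟶ X) (u v : S ⟶ A) :
    π u v ≫ compMap a u v = a ≫ π (u ≫ a) (v ≫ a) :=
  π_desc _ _

lemma isPushout_π_compMap (a : A ⟶ X) (u v : S ⟶ A) :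
    IsPushout a (π u v) (π (u ≫ a) (v ≫ a)) (compMap a u v) := by
  refine IsPushout.of_isColimit (PushoutCocone.IsColimit.mk (π_compMap a u v).symm
    (fun s => desc s.inl ?_) (fun s => π_desc _ _) (fun s => ?_)
    (fun s m hm _ => hom_ext (by rw [π_desc]; exact hm)))
  · simpa only [Category.assoc, s.condition] using condition u v =≫ s.inr
  · exact hom_ext (by rw [← Category.assoc, π_compMap, Category.assoc, π_desc, s.condition])

lemma comp_π_eq_zero_of_isLimit_compMap [HasZeroMorphisms C] {X₁ X₂ : C} {a₁ : A ⟶ X₁} {a₂ : A ⟶ X₂} {u v : S ⟶ A}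
    (hu : u ≫ a₂ = 0) (hv : v ≫ a₁ = 0)
    (hQ : IsLimit (BinaryFan.mk (compMap a₁ u v) (compMap a₂ u v))) :
    u ≫ π u v = 0 := by
  refine BinaryFan.IsLimit.hom_ext hQ ?_ ?_
  · show (u ≫ π u v) ≫ compMap a₁ u v = 0 ≫ compMap a₁ u v
    calc (u ≫ π u v) ≫ compMap a₁ u v = (u ≫ a₁) ≫ π (u ≫ a₁) (v ≫ a₁) := by
          rw [Category.assoc, π_compMap, Category.assoc]
      _ = (v ≫ a₁) ≫ π (u ≫ a₁) (v ≫ a₁) := condition _ _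
      _ = 0 ≫ compMap a₁ u v := by rw [Category.assoc, reassoc_of% hv, zero_comp, zero_comp]
  · show (u ≫ π u v) ≫ compMap a₂ u v = 0 ≫ compMap a₂ u v
    rw [Category.assoc, π_compMap, reassoc_of% hu, zero_comp, zero_comp]

end CategoryTheory.Limits.coequalizer

theorem anticommutative_of_regularly_coextensive_general [HasZeroMorphisms C]
    [HasBinaryProducts C] [HasCoequalizers C]
    (hcoext : ∀ ⦃A X₁ X₂ Q₁ Q Q₂ : C⦄ (a₁ : A ⟶ X₁) (a₂ : A ⟶ X₂),
      Nonempty (IsLimit (BinaryFan.mk a₁ a₂)) →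
      ∀ (q₁ : X₁ ⟶ Q₁) (q : A ⟶ Q) (q₂ : X₂ ⟶ Q₂) (r₁ : Q ⟶ Q₁) (r₂ : Q ⟶ Q₂),
        RegularEpi q₁ → RegularEpi q → RegularEpi q₂ →
        a₁ ≫ q₁ = q ≫ r₁ → a₂ ≫ q₂ = q ≫ r₂ →
        (Nonempty (IsLimit (BinaryFan.mk r₁ r₂)) ↔
          (IsPushout a₁ q q₁ r₁ ∧ IsPushout a₂ q q₂ r₂))) :
    Anticommutative C := by
  rintro X Y Z _ _ ⟨ρ, rfl, rfl⟩ S x y hxy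
  set u : S ⟶ X ⨯ Y := x ≫ prod.lift (𝟙 X) 0
  set v : S ⟶ X ⨯ Y := y ≫ prod.lift 0 (𝟙 Y)
  obtain ⟨hQ⟩ := (hcoext (prod.fst : X ⨯ Y ⟶ X) (prod.snd : X ⨯ Y ⟶ Y) ⟨prodIsProd X Y⟩
    _ (coequalizer.π u v) _ _ _ (coequalizerRegular _ _) (coequalizerRegular _ _) (coequalizerRegular _ _)
    (coequalizer.π_compMap _ u v).symm (coequalizer.π_compMap _ u v).symm).mpr
    ⟨coequalizer.isPushout_π_compMap _ u v, coequalizer.isPushout_π_compMap _ u v⟩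
  have hu : u ≫ coequalizer.π u v = 0 :=
    coequalizer.comp_π_eq_zero_of_isLimit_compMap
      (by simp only [u, Category.assoc, prod.lift_snd, comp_zero])
      (by simp only [v, Category.assoc, prod.lift_fst, comp_zero]) hQ
  have hv : v ≫ coequalizer.π u v = 0 := coequalizer.condition u v ▸ hu
  have huv : u ≫ ρ = v ≫ ρ := by simpa only [u, v, Category.assoc] using hxy
  have hρ : u ≫ ρ = 0 ∧ v ≫ ρ = 0 := by
    rw [← coequalizer.π_desc ρ huv, reassoc_of% hu, reassoc_of% hv, zero_comp]
    exact ⟨rfl, rfl⟩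
  simpa only [u, v, Category.assoc] using hρ

/-- A pointed category with binary products and coequalizers which is regularly
coextensive is anticommutative. Here regular coextensivity of every object is stated as:
for every binary product diagram `(A, a₁, a₂)`, regular epimorphisms `q₁, q, q₂` and
morphisms `r₁, r₂` making the two squares commute, `(Q, r₁, r₂)` is a binary product
diagram iff both squares are pushouts. -/
theorem anticommutative_of_regularly_coextensive [HasZeroObject C] [HasZeroMorphisms C]
    [HasBinaryProducts C] [HasCoequalizers C]
    (hcoext : ∀ ⦃A X₁ X₂ Q₁ Q Q₂ : C⦄ (a₁ : A ⟶ X₁) (a₂ : A ⟶ X₂),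
      Nonempty (IsLimit (BinaryFan.mk a₁ a₂)) →
      ∀ (q₁ : X₁ ⟶ Q₁) (q : A ⟶ Q) (q₂ : X₂ ⟶ Q₂) (r₁ : Q ⟶ Q₁) (r₂ : Q ⟶ Q₂),
        RegularEpi q₁ → RegularEpi q → RegularEpi q₂ →
        a₁ ≫ q₁ = q ≫ r₁ → a₂ ≫ q₂ = q ≫ r₂ →
        (Nonempty (IsLimit (BinaryFan.mk r₁ r₂)) ↔
          (IsPushout a₁ q q₁ r₁ ∧ IsPushout a₂ q q₂ r₂))) :
    Anticommutative C :=
  anticommutative_of_regularly_coextensive_general hcoext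
end

section
/- Let D be a finitely complete category satisfying the triangular lemma, let C be a finitely complete category, and let F : C ⥤ D be a functor which reflects isomorphisms (is conservative) and preserves pullbacks and equalizers. Then C satisfies the triangular lemma. -/
/-!
Transport the relations along `F`: `r ↦ F.map r ≫ prodComparison F X X`. Since `X ⨯ X` is a
pullback over the terminal object, the comparison map is mono, so the images of internal
equivalence relations are again mono; reflexivity, symmetry, transitivity and `R ∩ S ≤ T` are
each witnessed by one generic pair living in a pullback, and `F` preserves these pullbacks.
The triangular lemma in `D` then relates `F y` and `F z` by the image of `T`, and a conservative
functor preserving pullbacks reflects factorizations through monomorphisms such as `t`.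
-/

open CategoryTheory CategoryTheory.Limits

universe v u v₂ u₂

variable {C : Type u} [Category.{v} C]

namespace CategoryTheory

lemma IsPullback.comp_mono {P A B Z Z' : C} {fst : P ⟶ A} {snd : P ⟶ B} {f : A ⟶ Z}
    {g : B ⟶ Z} (h : IsPullback fst snd f g) (i : Z ⟶ Z') [Mono i] :
    IsPullback fst snd (f ≫ i) (g ≫ i) :=
  IsPullback.of_isLimit' ⟨by rw [h.w_assoc]⟩ (PullbackCone.isLimitOfCompMono f g i _ h.isLimit)

section Relations

variable [HasBinaryProducts C] {R₀ X : C} {r : R₀ ⟶ X ⨯ X}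

lemma relFactors_legs (r : R₀ ⟶ X ⨯ X) : RelFactors r (r ≫ prod.fst) (r ≫ prod.snd) :=
  ⟨𝟙 _, by ext <;> simp [prod.lift_fst, prod.lift_snd]⟩

lemma RelFactors.precomp {S : C} {x y : S ⟶ X} (h : RelFactors r x y) {S' : C} (f : S' ⟶ S) :
    RelFactors r (f ≫ x) (f ≫ y) := by
  obtain ⟨u, hu⟩ := h
  exact ⟨f ≫ u, by simp [hu]⟩

lemma RelFactors.exists_eq {S : C} {x y : S ⟶ X} (h : RelFactors r x y) :
    ∃ u : S ⟶ R₀, x = u ≫ r ≫ prod.fst ∧ y = u ≫ r ≫ prod.snd := by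
  obtain ⟨u, hu⟩ := h
  exact ⟨u, by simp [reassoc_of% hu, prod.lift_fst], by simp [reassoc_of% hu, prod.lift_snd]⟩

lemma IsInternalEquivalence.of_generic [Mono r] (hrefl : RelFactors r (𝟙 X) (𝟙 X))
    (hsymm : RelFactors r (r ≫ prod.snd) (r ≫ prod.fst))
    {P : C} {p₁ p₂ : P ⟶ R₀} (hP : IsPullback p₁ p₂ (r ≫ prod.snd) (r ≫ prod.fst))
    (htrans : RelFactors r (p₁ ≫ r ≫ prod.fst) (p₂ ≫ r ≫ prod.snd)) :
    IsInternalEquivalence r where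
  mono := ‹_›
  refl _ x := by simpa using hrefl.precomp x
  symm _ x y h := by
    obtain ⟨u, rfl, rfl⟩ := h.exists_eq
    exact hsymm.precomp u
  trans _ x y z hxy hyz := by
    obtain ⟨u, rfl, hu⟩ := hxy.exists_eq
    obtain ⟨v, hv, rfl⟩ := hyz.exists_eq
    simpa using htrans.precomp (hP.lift u v (hu.symm.trans hv))

lemma relFactors_inf_le_of_isPullback {S₀ T₀ P : C} {s : S₀ ⟶ X ⨯ X} {t : T₀ ⟶ X ⨯ X}
    {q₁ : P ⟶ R₀} {q₂ : P ⟶ S₀} (hP : IsPullback q₁ q₂ r s)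
    (h : RelFactors t (q₁ ≫ r ≫ prod.fst) (q₁ ≫ r ≫ prod.snd)) {W : C} (x y : W ⟶ X)
    (hr : RelFactors r x y) (hs : RelFactors s x y) : RelFactors t x y := by
  obtain ⟨u, hu⟩ := hr
  obtain ⟨v, hv⟩ := hs
  simpa [reassoc_of% hu, prod.lift_fst, prod.lift_snd] using
    h.precomp (hP.lift u v (hu.trans hv.symm))

end Relations

namespace Functor

variable {D : Type u₂} [Category.{v₂} D] (F : C ⥤ D)

section

variable [HasBinaryProducts C] [HasBinaryProducts D]

noncomputable def mapRel {R₀ X : C} (r : R₀ ⟶ X ⨯ X) : F.obj R₀ ⟶ F.obj X ⨯ F.obj X :=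
  F.map r ≫ prodComparison F X X

variable {R₀ X : C} {r : R₀ ⟶ X ⨯ X}

@[simp]
lemma mapRel_fst : F.mapRel r ≫ prod.fst = F.map (r ≫ prod.fst) := by
  simp [mapRel]

@[simp]
lemma mapRel_snd : F.mapRel r ≫ prod.snd = F.map (r ≫ prod.snd) := by
  simp [mapRel]

lemma map_lift_comp_prodComparison {W : C} (x y : W ⟶ X) :
    F.map (prod.lift x y) ≫ prodComparison F X X = prod.lift (F.map x) (F.map y) := by
  ext <;> simp only [Category.assoc, prodComparison_fst, prodComparison_snd, ← F.map_comp,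
    prod.lift_fst, prod.lift_snd]

lemma _root_.CategoryTheory.RelFactors.map {W : C} {x y : W ⟶ X} (h : RelFactors r x y) :
    RelFactors (F.mapRel r) (F.map x) (F.map y) := by
  obtain ⟨u, hu⟩ := h
  exact ⟨F.map u, by rw [mapRel, ← F.map_comp_assoc, hu, map_lift_comp_prodComparison]⟩

end

variable [PreservesLimitsOfShape WalkingCospan F]

/-- The pullback of `t` along `g` is a mono whose image under `F` is split epi, hence an iso. -/
lemma exists_lift_of_map_lift [F.ReflectsIsomorphisms] [HasPullbacks C] {T Y W : C}
    (t : T ⟶ Y) [Mono t] (g : W ⟶ Y) (w : F.obj W ⟶ F.obj T) (hw : w ≫ F.map t = F.map g) :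
    ∃ u : W ⟶ T, u ≫ t = g := by
  have hP := (IsPullback.of_hasPullback t g).map F
  have : IsSplitEpi (F.map (pullback.snd t g)) :=
    IsSplitEpi.mk' ⟨hP.lift w (𝟙 _) (by simpa using hw), hP.lift_snd _ _ _⟩
  have : IsIso (F.map (pullback.snd t g)) := isIso_of_mono_of_isSplitEpi _
  have : IsIso (pullback.snd t g) := isIso_of_reflects_iso _ F
  exact ⟨CategoryTheory.inv (pullback.snd t g) ≫ pullback.fst t g, by simp [pullback.condition]⟩

lemma mono_prodComparison [HasBinaryProducts C] [HasTerminal C] [HasBinaryProducts D]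
    (X Y : C) : Mono (prodComparison F X Y) := by
  have hP := (IsPullback.of_hasBinaryProduct' X Y).map F
  refine ⟨fun a b h => hP.hom_ext ?_ ?_⟩
  · simpa using congrArg (· ≫ prod.fst) h
  · simpa using congrArg (· ≫ prod.snd) h

variable [HasFiniteLimits C] [HasBinaryProducts D] {R₀ X : C} {r : R₀ ⟶ X ⨯ X}

lemma relFactors_of_map [F.ReflectsIsomorphisms] [Mono r] {W : C} {x y : W ⟶ X}
    (h : RelFactors (F.mapRel r) (F.map x) (F.map y)) : RelFactors r x y := by
  obtain ⟨w, hw⟩ := h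
  have := F.mono_prodComparison X X
  refine F.exists_lift_of_map_lift r (prod.lift x y) w ((cancel_mono (prodComparison F X X)).1 ?_)
  rw [Category.assoc, ← mapRel, hw, map_lift_comp_prodComparison]

lemma _root_.CategoryTheory.IsInternalEquivalence.map (hr : IsInternalEquivalence r) :
    IsInternalEquivalence (F.mapRel r) := by
  have := hr.mono
  have := F.mono_prodComparison X X
  have : Mono (F.mapRel r) := by rw [mapRel]; infer_instance
  have hC := IsPullback.of_hasPullback (r ≫ prod.snd) (r ≫ prod.fst)
  have hP := hC.map F
  rw [← mapRel_snd, ← mapRel_fst] at hP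
  refine .of_generic (by simpa using (hr.refl (𝟙 X)).map F) ?_ hP ?_
  · simpa using (hr.symm _ _ (relFactors_legs r)).map F
  · have h₂ := (relFactors_legs r).precomp (pullback.snd (r ≫ prod.snd) (r ≫ prod.fst))
    rw [← hC.w] at h₂
    simpa using (hr.trans _ _ _ ((relFactors_legs r).precomp _) h₂).map F

lemma mapRel_inf_le {S₀ T₀ : C} {s : S₀ ⟶ X ⨯ X} {t : T₀ ⟶ X ⨯ X}
    (hRS : ∀ ⦃W : C⦄ (x y : W ⟶ X), RelFactors r x y → RelFactors s x y → RelFactors t x y)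
    ⦃V : D⦄ (a b : V ⟶ F.obj X) :
    RelFactors (F.mapRel r) a b → RelFactors (F.mapRel s) a b → RelFactors (F.mapRel t) a b := by
  have := F.mono_prodComparison X X
  refine relFactors_inf_le_of_isPullback
    (((IsPullback.of_hasPullback r s).map F).comp_mono _) ?_ a b
  have := hRS _ _ ((relFactors_legs r).precomp (pullback.fst r s))
    (by simpa [pullback.condition_assoc] using (relFactors_legs s).precomp (pullback.snd r s))
  simpa using this.map F

end Functor

end CategoryTheory

theorem triangular_of_conservative_functor_general {D : Type u₂} [Category.{v₂} D]
    [HasFiniteLimits C] [HasFiniteLimits D]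
    (F : C ⥤ D) [F.ReflectsIsomorphisms]
    [PreservesLimitsOfShape WalkingCospan F]
    (hD : SatisfiesTriangularLemma D) :
    SatisfiesTriangularLemma C := by
  intro X R₀ S₀ T₀ r s t hr hs ht hRS W x y z hxy hyz hxz
  have := ht.mono
  exact F.relFactors_of_map <| hD _ _ _ (hr.map F) (hs.map F) (ht.map F) (F.mapRel_inf_le hRS)
    _ _ _ (hxy.map F) (hyz.map F) (hxz.map F)

/-- If `D` is finitely complete and satisfies the triangular lemma, `C` is finitely
complete, and `F : C ⥤ D` is conservative and preserves pullbacks and equalizers,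
then `C` satisfies the triangular lemma. -/
theorem triangular_of_conservative_functor {D : Type u₂} [Category.{v₂} D]
    [HasFiniteLimits C] [HasFiniteLimits D]
    (F : C ⥤ D) [F.ReflectsIsomorphisms]
    [PreservesLimitsOfShape WalkingCospan F]
    [PreservesLimitsOfShape WalkingParallelPair F]
    (hD : SatisfiesTriangularLemma D) :
    SatisfiesTriangularLemma C :=
  triangular_of_conservative_functor_general F hD
end

section
/- Let C be a finitely complete category satisfying the triangular lemma, let X be an object of C, and let R and S be internal equivalence relations on X represented by monomorphisms r = ⟨r₁, r₂⟩ : R₀ ⟶ X ⨯ X and s = ⟨s₁, s₂⟩ : S₀ ⟶ X ⨯ X. Let (P, π_R : P ⟶ R₀, π_S : P ⟶ S₀) be the pullback of r₂ along s₁ (so π_R ≫ r₂ = π_S ≫ s₁), and suppose there is a partial Mal'tsev operation p : P ⟶ X, i.e. a morphism such that for every w : W ⟶ P, writing x = w ≫ π_R ≫ r₁, y = w ≫ π_R ≫ r₂ and z = w ≫ π_S ≫ s₂: if x = y then w ≫ p = z, and if y = z then w ≫ p = x. Then R ∩ S is the diagonal of X: for all morphisms a, b : W ⟶ X with a R b and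 a S b, one has a = b. -/
open CategoryTheory CategoryTheory.Limits

universe v u v₂ u₂

variable {C : Type u} [Category.{v} C]

/-!
The pullback `P` of `r₂` along `s₁` is the object of triples `(x, y, z)` with `x R y` and
`y S z`. Given `a R b` and `a S b`, consider the triples `t₁ = (a, b, b)`, `t₂ = (b, b, b)`
and `t₃ = (b, b, a)`. The Mal'tsev identities give `p t₁ = a`, `p t₂ = b` and `p t₃ = a`.
Now apply the triangular lemma on `P` to the kernel pairs of the two projections
`P ⟶ S₀`, `P ⟶ R₀` (which meet in the diagonal, `P` being a pullback) and of `p`: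
`t₁` and `t₂` agree in `S₀`, `t₂` and `t₃` agree in `R₀`, and `p t₁ = p t₃`,
hence `b = p t₂ = p t₃ = a`.
-/

namespace CategoryTheory

section

variable [HasBinaryProducts C]

lemma relFactors_prod_lift_iff {R₀ X W : C} (r₁ r₂ : R₀ ⟶ X) (x y : W ⟶ X) :
    RelFactors (prod.lift r₁ r₂) x y ↔ ∃ u : W ⟶ R₀, u ≫ r₁ = x ∧ u ≫ r₂ = y := by
  constructor
  · rintro ⟨u, hu⟩
    exact ⟨u, by simpa [prod.lift_fst, prod.lift_snd] using hu =≫ prod.fst,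
      by simpa [prod.lift_fst, prod.lift_snd] using hu =≫ prod.snd⟩
  · rintro ⟨u, rfl, rfl⟩
    exact ⟨u, by ext <;> simp⟩

noncomputable def kernelPairRel {Y Z : C} (f : Y ⟶ Z) [HasPullback f f] :
    pullback f f ⟶ Y ⨯ Y :=
  prod.lift (pullback.fst f f) (pullback.snd f f)

variable {Y Z : C} (f : Y ⟶ Z) [HasPullback f f]

lemma relFactors_kernelPairRel_iff {W : C} (x y : W ⟶ Y) :
    RelFactors (kernelPairRel f) x y ↔ x ≫ f = y ≫ f := by
  rw [kernelPairRel, relFactors_prod_lift_iff]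
  constructor
  · rintro ⟨u, rfl, rfl⟩
    simp [pullback.condition]
  · intro h
    exact ⟨pullback.lift x y h, pullback.lift_fst _ _ _, pullback.lift_snd _ _ _⟩

lemma isInternalEquivalence_kernelPairRel : IsInternalEquivalence (kernelPairRel f) where
  mono := ⟨fun g h e => pullback.hom_ext
    (by simpa [kernelPairRel, prod.lift_fst, prod.lift_snd] using e =≫ prod.fst)
    (by simpa [kernelPairRel, prod.lift_fst, prod.lift_snd] using e =≫ prod.snd)⟩
  refl _ x := (relFactors_kernelPairRel_iff f x x).2 rfl
  symm _ x y h := (relFactors_kernelPairRel_iff f y x).2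
    ((relFactors_kernelPairRel_iff f x y).1 h).symm
  trans _ x y z hxy hyz := (relFactors_kernelPairRel_iff f x z).2
    (((relFactors_kernelPairRel_iff f x y).1 hxy).trans ((relFactors_kernelPairRel_iff f y z).1 hyz))

end

lemma SatisfiesTriangularLemma.comp_eq_of_kernelPairs [HasBinaryProducts C] [HasPullbacks C]
    (hC : SatisfiesTriangularLemma C) {P A B Z : C} (f : P ⟶ A) (g : P ⟶ B) (h : P ⟶ Z)
    (hfgh : ∀ ⦃W : C⦄ (x y : W ⟶ P), x ≫ f = y ≫ f → x ≫ g = y ≫ g → x ≫ h = y ≫ h)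
    {W : C} (x y z : W ⟶ P) (hxy : x ≫ f = y ≫ f) (hyz : y ≫ g = z ≫ g)
    (hxz : x ≫ h = z ≫ h) : y ≫ h = z ≫ h := by
  simp only [← relFactors_kernelPairRel_iff] at hfgh hxy hyz hxz ⊢
  exact hC _ _ _ (isInternalEquivalence_kernelPairRel f) (isInternalEquivalence_kernelPairRel g)
    (isInternalEquivalence_kernelPairRel h) hfgh x y z hxy hyz hxz

end CategoryTheory

/-- In a finitely complete category satisfying the triangular lemma, if two internal
equivalence relations `R` and `S` on `X` admit a partial Mal'tsev operation
`p : R₀ ×_X S₀ ⟶ X`, then `R ∩ S` is the diagonal of `X`. -/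
theorem inf_eq_diagonal_of_partial_maltsev [HasFiniteLimits C]
    (hC : SatisfiesTriangularLemma C)
    {X R₀ S₀ P : C} (r₁ r₂ : R₀ ⟶ X) (s₁ s₂ : S₀ ⟶ X)
    (hr : IsInternalEquivalence (prod.lift r₁ r₂))
    (hs : IsInternalEquivalence (prod.lift s₁ s₂))
    (πR : P ⟶ R₀) (πS : P ⟶ S₀) (hP : IsPullback πR πS r₂ s₁)
    (p : P ⟶ X)
    (hp : ∀ ⦃W : C⦄ (w : W ⟶ P),
      (w ≫ πR ≫ r₁ = w ≫ πR ≫ r₂ → w ≫ p = w ≫ πS ≫ s₂) ∧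
      (w ≫ πR ≫ r₂ = w ≫ πS ≫ s₂ → w ≫ p = w ≫ πR ≫ r₁)) :
    ∀ ⦃W : C⦄ (a b : W ⟶ X),
      RelFactors (prod.lift r₁ r₂) a b → RelFactors (prod.lift s₁ s₂) a b → a = b := by
  intro W a b hRab hSab
  obtain ⟨uab, huab₁, huab₂⟩ := (relFactors_prod_lift_iff r₁ r₂ a b).1 hRab
  obtain ⟨ubb, hubb₁, hubb₂⟩ := (relFactors_prod_lift_iff r₁ r₂ b b).1 (hr.refl b)
  obtain ⟨vbb, hvbb₁, hvbb₂⟩ := (relFactors_prod_lift_iff s₁ s₂ b b).1 (hs.refl b)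
  obtain ⟨vba, hvba₁, hvba₂⟩ := (relFactors_prod_lift_iff s₁ s₂ b a).1 (hs.symm a b hSab)
  let t₁ : W ⟶ P := hP.lift uab vbb (by rw [huab₂, hvbb₁])
  let t₂ : W ⟶ P := hP.lift ubb vbb (by rw [hubb₂, hvbb₁])
  let t₃ : W ⟶ P := hP.lift ubb vba (by rw [hubb₂, hvba₁])
  have hp₁ : t₁ ≫ p = a := by
    rw [(hp t₁).2 (by simp [t₁, huab₂, hvbb₂]), hP.lift_fst_assoc, huab₁]
  have hp₂ : t₂ ≫ p = b := by
    rw [(hp t₂).2 (by simp [t₂, hubb₂, hvbb₂]), hP.lift_fst_assoc, hubb₁]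
  have hp₃ : t₃ ≫ p = a := by
    rw [(hp t₃).1 (by simp [t₃, hubb₁, hubb₂]), hP.lift_snd_assoc, hvba₂]
  have hp₂₃ : t₂ ≫ p = t₃ ≫ p :=
    hC.comp_eq_of_kernelPairs πS πR p (fun _ x y hS hR => by rw [hP.hom_ext hR hS])
      t₁ t₂ t₃ (by simp [t₁, t₂]) (by simp [t₂, t₃]) (hp₁.trans hp₃.symm)
  calc a = t₃ ≫ p := hp₃.symm
    _ = t₂ ≫ p := hp₂₃.symm
    _ = b := hp₂
end

section
/- Let C be a finitely complete category satisfying the triangular lemma, and let an internal groupoid in C be given: objects C₀, C₁, C₂, C₃ and morphisms d₁, d₂ : C₁ ⟶ C₀, s : C₀ ⟶ C₁, p₁, p₂ : C₂ ⟶ C₁, m : C₂ ⟶ C₁, q₁, q₂ : C₃ ⟶ C₂, σ : C₁ ⟶ C₁, such that (C₂, p₁, p₂) is a pullback of d₁ along d₂ (i.e. p₂ ≫ d₁ = p₁ ≫ d₂ is a pullback square) and (C₃, q₁, q₂) is a pullback of p₁ along p₂ (i.e. q₂ ≫ p₁ = q₁ ≫ p₂ is a pullback square), satisfying (in the paper's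 applicative notation, where (f, g) : W ⟶ C₂ denotes the morphism induced into the pullback C₂ by f, g : W ⟶ C₁ with g ≫ d₁ = f ≫ d₂): (i) d₁ ∘ s = 𝟙 C₀ = d₂ ∘ s; (ii) m ∘ (1_{C₁}, s ∘ d₂) = 1_{C₁} = m ∘ (s ∘ d₁, 1_{C₁}); (iii) d₁ ∘ p₁ = d₁ ∘ m and d₂ ∘ p₂ = d₂ ∘ m; (iv) m ∘ (p₁ ∘ q₁, m ∘ q₂) = m ∘ (m ∘ q₁, p₂ ∘ q₂); (v) d₁ ∘ σ = d₂ and d₂ ∘ σ = d₁; (vi) m ∘ (1_{C₁}, σ) = s ∘ d₁ and m ∘ (σ, 1_{C₁}) = s ∘ d₂. Then the morphism ⟨d₁, d₂⟩ : C₁ ⟶ C₀ ⨯ C₀ is a monomorphism; that is, the internal groupoid is an internal equivalence relation. -/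
/-!
In a groupoid a morphism `a` is recovered from a composable pair `(a, b)` as `(a ≫ b) ≫ b⁻¹`,
so composition is right cancellative, and two parallel morphisms `f, g` coincide as soon as
the loop `f ≫ g⁻¹` is an identity. That every loop `h` is an identity comes from the triangular
lemma on the object `C₂` of composable pairs, for the kernel pairs of the two projections and of
the composition: `(h, 1)` and `(h, h)` share the first factor, `(h, h)` and `(1, h)` the second,
and `(h, 1)`, `(1, h)` both compose to `h`; hence `h ≫ h = 1 ≫ h`, and cancelling `h` gives
`h = 1`.
-/

open CategoryTheory CategoryTheory.Limits

universe v u v₂ u₂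

variable {C : Type u} [Category.{v} C]

namespace CategoryTheory

section KernelRel

variable [HasBinaryProducts C] [HasPullbacks C]

noncomputable def kernelRel {X Y : C} (f : X ⟶ Y) : pullback f f ⟶ X ⨯ X :=
  prod.lift (pullback.fst f f) (pullback.snd f f)

theorem relFactors_kernelRel_iff {X Y : C} (f : X ⟶ Y) {S : C} (x y : S ⟶ X) :
    RelFactors (kernelRel f) x y ↔ x ≫ f = y ≫ f := by
  constructor
  · rintro ⟨u, hu⟩
    have hx : u ≫ pullback.fst f f = x := by
      simpa only [kernelRel, prod.comp_lift, prod.lift_fst] using hu =≫ prod.fst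
    have hy : u ≫ pullback.snd f f = y := by
      simpa only [kernelRel, prod.comp_lift, prod.lift_snd] using hu =≫ prod.snd
    rw [← hx, ← hy, Category.assoc, Category.assoc, pullback.condition]
  · intro h
    exact ⟨pullback.lift x y h, by
      rw [kernelRel, prod.comp_lift, pullback.lift_fst, pullback.lift_snd]⟩

theorem isInternalEquivalence_kernelRel {X Y : C} (f : X ⟶ Y) :
    IsInternalEquivalence (kernelRel f) where
  mono := ⟨fun a b hab => pullback.hom_ext
    (by simpa only [kernelRel, prod.comp_lift, prod.lift_fst] using hab =≫ prod.fst)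
    (by simpa only [kernelRel, prod.comp_lift, prod.lift_snd] using hab =≫ prod.snd)⟩
  refl _ x := (relFactors_kernelRel_iff f x x).2 rfl
  symm _ x y := by simpa only [relFactors_kernelRel_iff] using Eq.symm
  trans _ x y z := by simpa only [relFactors_kernelRel_iff] using Eq.trans

theorem SatisfiesTriangularLemma.comp_eq_of_kernelPairs_s12 (hC : SatisfiesTriangularLemma C)
    {X Y₁ Y₂ Z : C} (f₁ : X ⟶ Y₁) (f₂ : X ⟶ Y₂) (k : X ⟶ Z)
    (hk : ∀ ⦃W : C⦄ (a b : W ⟶ X), a ≫ f₁ = b ≫ f₁ → a ≫ f₂ = b ≫ f₂ → a ≫ k = b ≫ k)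
    {W : C} (x y z : W ⟶ X) (hxy : x ≫ f₁ = y ≫ f₁) (hyz : y ≫ f₂ = z ≫ f₂)
    (hxz : x ≫ k = z ≫ k) : y ≫ k = z ≫ k := by
  simp only [← relFactors_kernelRel_iff] at hk hxy hyz hxz ⊢
  exact hC _ _ _ (isInternalEquivalence_kernelRel f₁) (isInternalEquivalence_kernelRel f₂)
    (isInternalEquivalence_kernelRel k) hk x y z hxy hyz hxz

end KernelRel

/-! Generalized elements `u : W ⟶ C₂` are composable pairs `(u ≫ p₁, u ≫ p₂)` with
composite `u ≫ m`. -/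
namespace InternalGroupoid

variable {C₀ C₁ C₂ : C} {d₁ d₂ : C₁ ⟶ C₀} {s : C₀ ⟶ C₁} {p₁ p₂ m : C₂ ⟶ C₁}

theorem mul_eq_fst_of_snd_eq_unit (hpb₂ : IsPullback p₂ p₁ d₁ d₂) (hs₁ : s ≫ d₁ = 𝟙 C₀)
    (hm₁ : hpb₂.lift (d₂ ≫ s) (𝟙 C₁)
        (by rw [Category.assoc, hs₁, Category.comp_id, Category.id_comp]) ≫ m = 𝟙 C₁)
    ⦃W : C⦄ (u : W ⟶ C₂) (hu : u ≫ p₂ = u ≫ p₁ ≫ d₂ ≫ s) : u ≫ m = u ≫ p₁ := by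
  have hu' : (u ≫ p₁) ≫ hpb₂.lift (d₂ ≫ s) (𝟙 C₁) (by simp [hs₁]) = u :=
    hpb₂.hom_ext (by simp [hu]) (by simp)
  conv_lhs => rw [← hu']
  simp [hm₁]

theorem mul_eq_snd_of_fst_eq_unit (hpb₂ : IsPullback p₂ p₁ d₁ d₂) (hs₂ : s ≫ d₂ = 𝟙 C₀)
    (hm₂ : hpb₂.lift (𝟙 C₁) (d₁ ≫ s)
        (by rw [Category.id_comp, Category.assoc, hs₂, Category.comp_id]) ≫ m = 𝟙 C₁)
    ⦃W : C⦄ (u : W ⟶ C₂) (hu : u ≫ p₁ = u ≫ p₂ ≫ d₁ ≫ s) : u ≫ m = u ≫ p₂ := by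
  have hu' : (u ≫ p₂) ≫ hpb₂.lift (𝟙 C₁) (d₁ ≫ s) (by simp [hs₂]) = u :=
    hpb₂.hom_ext (by simp) (by simp [hu])
  conv_lhs => rw [← hu']
  simp [hm₂]

theorem mul_eq_unit_of_snd_eq_inv {σ : C₁ ⟶ C₁} (hpb₂ : IsPullback p₂ p₁ d₁ d₂)
    (hσ₁ : σ ≫ d₁ = d₂)
    (hσ₃ : hpb₂.lift σ (𝟙 C₁) (by rw [hσ₁, Category.id_comp]) ≫ m = d₁ ≫ s)
    ⦃W : C⦄ (u : W ⟶ C₂) (hu : u ≫ p₂ = u ≫ p₁ ≫ σ) : u ≫ m = u ≫ p₁ ≫ d₁ ≫ s := by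
  have hu' : (u ≫ p₁) ≫ hpb₂.lift σ (𝟙 C₁) (by simp [hσ₁]) = u :=
    hpb₂.hom_ext (by simp [hu]) (by simp)
  conv_lhs => rw [← hu']
  simp [hσ₃]

/-- Associativity `a ≫ (b ≫ c) = (a ≫ b) ≫ c`, for `u = (a, b)`, `v = (b, c)`,
`x = (a, b ≫ c)` and `y = (a ≫ b, c)`. -/
theorem mul_assoc_of_pairs {C₃ : C} {q₁ q₂ : C₃ ⟶ C₂} (hpb₂ : IsPullback p₂ p₁ d₁ d₂)
    (hpb₃ : IsPullback q₂ q₁ p₁ p₂) (hm₃ : m ≫ d₁ = p₁ ≫ d₁) (hm₄ : m ≫ d₂ = p₂ ≫ d₂)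
    (hassoc : hpb₂.lift (q₂ ≫ m) (q₁ ≫ p₁)
        (by rw [Category.assoc, hm₃, ← Category.assoc, hpb₃.w, Category.assoc,
              hpb₂.w, ← Category.assoc]) ≫ m =
      hpb₂.lift (q₂ ≫ p₂) (q₁ ≫ m)
        (by rw [Category.assoc, hpb₂.w, ← Category.assoc, hpb₃.w, Category.assoc,
              ← hm₄, ← Category.assoc]) ≫ m)
    ⦃W : C⦄ (u v x y : W ⟶ C₂) (huv : u ≫ p₂ = v ≫ p₁)
    (hx₁ : x ≫ p₁ = u ≫ p₁) (hx₂ : x ≫ p₂ = v ≫ m)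
    (hy₁ : y ≫ p₁ = u ≫ m) (hy₂ : y ≫ p₂ = v ≫ p₂) : x ≫ m = y ≫ m := by
  let t := hpb₃.lift v u huv.symm
  have hx : t ≫ hpb₂.lift (q₂ ≫ m) (q₁ ≫ p₁) (by simp [hm₃, hpb₃.w_assoc, hpb₂.w]) = x :=
    hpb₂.hom_ext (by simp [t, hx₂]) (by simp [t, hx₁])
  have hy : t ≫ hpb₂.lift (q₂ ≫ p₂) (q₁ ≫ m) (by simp [hm₄, hpb₃.w_assoc, hpb₂.w]) = y :=
    hpb₂.hom_ext (by simp [t, hy₂]) (by simp [t, hy₁])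
  rw [← hx, ← hy]
  simpa only [Category.assoc] using t ≫= hassoc

theorem fst_eq_of_snd_eq_of_mul_eq {σ : C₁ ⟶ C₁} (hpb₂ : IsPullback p₂ p₁ d₁ d₂)
    (hσ₁ : σ ≫ d₁ = d₂) (hm₃ : m ≫ d₁ = p₁ ≫ d₁) (hm₄ : m ≫ d₂ = p₂ ≫ d₂)
    (hunitR : ∀ ⦃W : C⦄ (u : W ⟶ C₂), u ≫ p₂ = u ≫ p₁ ≫ d₂ ≫ s → u ≫ m = u ≫ p₁)
    (hinv : ∀ ⦃W : C⦄ (u : W ⟶ C₂), u ≫ p₂ = u ≫ p₁ ≫ σ → u ≫ m = u ≫ p₁ ≫ d₁ ≫ s)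
    (hassoc : ∀ ⦃W : C⦄ (u v x y : W ⟶ C₂), u ≫ p₂ = v ≫ p₁ →
      x ≫ p₁ = u ≫ p₁ → x ≫ p₂ = v ≫ m → y ≫ p₁ = u ≫ m → y ≫ p₂ = v ≫ p₂ → x ≫ m = y ≫ m)
    ⦃W : C⦄ (u v : W ⟶ C₂) (h₂ : u ≫ p₂ = v ≫ p₂) (hm : u ≫ m = v ≫ m) :
    u ≫ p₁ = v ≫ p₁ := by
  -- `a = (a ≫ b) ≫ b⁻¹` for `u = (a, b)`
  have key : ∀ u : W ⟶ C₂,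
      hpb₂.lift (u ≫ p₂ ≫ σ) (u ≫ m) (by simp [hσ₁, hm₄]) ≫ m = u ≫ p₁ := by
    intro u
    let w := hpb₂.lift (u ≫ p₂ ≫ σ) (u ≫ p₂) (by simp [hσ₁])
    have hw : w ≫ m = u ≫ p₁ ≫ d₂ ≫ s := by
      rw [hinv w (by simp [w])]
      simp [w, hpb₂.w_assoc]
    let x := hpb₂.lift (w ≫ m) (u ≫ p₁) (by simp [w, hm₃, hpb₂.w])
    have hx : x ≫ m = u ≫ p₁ := (hunitR x (by simp [x, hw])).trans (by simp [x])
    rw [← hx]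
    exact (hassoc u w x _ (by simp [w]) (by simp [x]) (by simp [x]) (by simp) (by simp [w])).symm
  rw [← key u, ← key v]
  congr 1
  exact hpb₂.hom_ext (by simp [reassoc_of% h₂]) (by simp [hm])

theorem loop_eq_unit [HasBinaryProducts C] [HasPullbacks C] (hC : SatisfiesTriangularLemma C)
    (hpb₂ : IsPullback p₂ p₁ d₁ d₂) (hs₁ : s ≫ d₁ = 𝟙 C₀) (hs₂ : s ≫ d₂ = 𝟙 C₀)
    (hunitR : ∀ ⦃W : C⦄ (u : W ⟶ C₂), u ≫ p₂ = u ≫ p₁ ≫ d₂ ≫ s → u ≫ m = u ≫ p₁)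
    (hunitL : ∀ ⦃W : C⦄ (u : W ⟶ C₂), u ≫ p₁ = u ≫ p₂ ≫ d₁ ≫ s → u ≫ m = u ≫ p₂)
    (hcancel : ∀ ⦃W : C⦄ (u v : W ⟶ C₂), u ≫ p₂ = v ≫ p₂ → u ≫ m = v ≫ m → u ≫ p₁ = v ≫ p₁)
    ⦃W : C⦄ (h : W ⟶ C₁) (hh : h ≫ d₁ = h ≫ d₂) : h = h ≫ d₁ ≫ s := by
  let e := h ≫ d₁ ≫ s
  let x := hpb₂.lift e h (by simp [e, hs₁, hh])
  let y := hpb₂.lift h h hh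
  let z := hpb₂.lift h e (by simp [e, hs₂])
  have hxm : x ≫ m = h := (hunitR x (by simp [x, e, reassoc_of% hh])).trans (by simp [x])
  have hzm : z ≫ m = h := (hunitL z (by simp [z, e])).trans (by simp [z])
  have hym : y ≫ m = z ≫ m :=
    hC.comp_eq_of_kernelPairs_s12 p₁ p₂ m (fun _ a b h₁ h₂ => by rw [hpb₂.hom_ext h₂ h₁])
      x y z (by simp [x, y]) (by simp [y, z]) (by rw [hxm, hzm])
  simpa [y, z, e] using hcancel y z (by simp [y, z]) hym

theorem mono_lift_of_loop_eq_unit [HasBinaryProducts C] {σ : C₁ ⟶ C₁}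
    (hpb₂ : IsPullback p₂ p₁ d₁ d₂) (hσ₁ : σ ≫ d₁ = d₂) (hσ₂ : σ ≫ d₂ = d₁)
    (hm₃ : m ≫ d₁ = p₁ ≫ d₁) (hm₄ : m ≫ d₂ = p₂ ≫ d₂)
    (hinv : ∀ ⦃W : C⦄ (u : W ⟶ C₂), u ≫ p₂ = u ≫ p₁ ≫ σ → u ≫ m = u ≫ p₁ ≫ d₁ ≫ s)
    (hcancel : ∀ ⦃W : C⦄ (u v : W ⟶ C₂), u ≫ p₂ = v ≫ p₂ → u ≫ m = v ≫ m → u ≫ p₁ = v ≫ p₁)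
    (hloop : ∀ ⦃W : C⦄ (h : W ⟶ C₁), h ≫ d₁ = h ≫ d₂ → h = h ≫ d₁ ≫ s) :
    Mono (prod.lift d₁ d₂) := by
  refine ⟨fun f g hfg => ?_⟩
  have hd₁ : f ≫ d₁ = g ≫ d₁ := by
    simpa only [prod.comp_lift, prod.lift_fst] using hfg =≫ prod.fst
  have hd₂ : f ≫ d₂ = g ≫ d₂ := by
    simpa only [prod.comp_lift, prod.lift_snd] using hfg =≫ prod.snd
  let u := hpb₂.lift (g ≫ σ) f (by simp [hσ₁, hd₂])
  let v := hpb₂.lift (g ≫ σ) g (by simp [hσ₁])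
  have hum : u ≫ m = v ≫ m :=
    calc u ≫ m = (u ≫ m) ≫ d₁ ≫ s := hloop _ (by simp [u, hm₃, hm₄, hσ₂, hd₁])
      _ = g ≫ d₁ ≫ s := by simp [u, reassoc_of% hm₃, reassoc_of% hd₁]
      _ = v ≫ m := by rw [hinv v (by simp [v])]; simp [v]
  simpa [u, v] using hcancel u v (by simp [u, v]) hum

end InternalGroupoid

end CategoryTheory

/-- In a finitely complete category satisfying the triangular lemma, every internal
groupoid is an internal equivalence relation: the morphism `⟨d₁, d₂⟩ : C₁ ⟶ C₀ ⨯ C₀`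
is a monomorphism. -/
theorem internal_groupoid_is_relation [HasFiniteLimits C]
    (hC : SatisfiesTriangularLemma C)
    {C₀ C₁ C₂ C₃ : C} (d₁ d₂ : C₁ ⟶ C₀) (s : C₀ ⟶ C₁)
    (p₁ p₂ : C₂ ⟶ C₁) (m : C₂ ⟶ C₁) (q₁ q₂ : C₃ ⟶ C₂) (σ : C₁ ⟶ C₁)
    -- `(C₂, p₁, p₂)` is a pullback of `d₁` along `d₂`
    (hpb₂ : IsPullback p₂ p₁ d₁ d₂)
    -- `(C₃, q₁, q₂)` is a pullback of `p₁` along `p₂`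
    (hpb₃ : IsPullback q₂ q₁ p₁ p₂)
    -- (i)
    (hs₁ : s ≫ d₁ = 𝟙 C₀) (hs₂ : s ≫ d₂ = 𝟙 C₀)
    -- (iii)
    (hm₃ : m ≫ d₁ = p₁ ≫ d₁) (hm₄ : m ≫ d₂ = p₂ ≫ d₂)
    -- (ii): `m ∘ (1, s ∘ d₂) = 1 = m ∘ (s ∘ d₁, 1)`
    (hm₁ : hpb₂.lift (d₂ ≫ s) (𝟙 C₁)
        (by rw [Category.assoc, hs₁, Category.comp_id, Category.id_comp]) ≫ m = 𝟙 C₁)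
    (hm₂ : hpb₂.lift (𝟙 C₁) (d₁ ≫ s)
        (by rw [Category.id_comp, Category.assoc, hs₂, Category.comp_id]) ≫ m = 𝟙 C₁)
    -- (iv): associativity `m ∘ (p₁ ∘ q₁, m ∘ q₂) = m ∘ (m ∘ q₁, p₂ ∘ q₂)`
    (hassoc : hpb₂.lift (q₂ ≫ m) (q₁ ≫ p₁)
        (by rw [Category.assoc, hm₃, ← Category.assoc, hpb₃.w, Category.assoc,
              hpb₂.w, ← Category.assoc]) ≫ m =
      hpb₂.lift (q₂ ≫ p₂) (q₁ ≫ m)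
        (by rw [Category.assoc, hpb₂.w, ← Category.assoc, hpb₃.w, Category.assoc,
              ← hm₄, ← Category.assoc]) ≫ m)
    -- (v)
    (hσ₁ : σ ≫ d₁ = d₂) (hσ₂ : σ ≫ d₂ = d₁)
    -- (vi): `m ∘ (1, σ) = s ∘ d₁` and `m ∘ (σ, 1) = s ∘ d₂`
    (hσ₃ : hpb₂.lift σ (𝟙 C₁) (by rw [hσ₁, Category.id_comp]) ≫ m = d₁ ≫ s) :
    Mono (prod.lift d₁ d₂) := by
  have hunitR := InternalGroupoid.mul_eq_fst_of_snd_eq_unit hpb₂ hs₁ hm₁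
  have hunitL := InternalGroupoid.mul_eq_snd_of_fst_eq_unit hpb₂ hs₂ hm₂
  have hinv := InternalGroupoid.mul_eq_unit_of_snd_eq_inv hpb₂ hσ₁ hσ₃
  have hcancel := InternalGroupoid.fst_eq_of_snd_eq_of_mul_eq hpb₂ hσ₁ hm₃ hm₄ hunitR hinv
    (InternalGroupoid.mul_assoc_of_pairs hpb₂ hpb₃ hm₃ hm₄ hassoc)
  exact InternalGroupoid.mono_lift_of_loop_eq_unit hpb₂ hσ₁ hσ₂ hm₃ hm₄ hinv hcancel
    (InternalGroupoid.loop_eq_unit hC hpb₂ hs₁ hs₂ hunitR hunitL hcancel)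
end

section
/- Let F be the free group on two generators (e.g. F = FreeGroup Bool, with generators a = of true and b = of false), and let f : F →* F be the unique group homomorphism with f(a) = a and f(b) = a. Then: (1) the center of F is trivial (Subgroup.center F = ⊥), so F is a centerless group and f is a morphism of the full subcategory of centerless groups; (2) the map ρ : F × F → F defined by ρ (u, v) = f u * f v is a group homomorphism, and it satisfies ρ (u, 1) = f u = ρ (1, u) for all u ∈ F, so f commutes with itself in the sense of Huq; (3) f is not disjoint from itself: f a = f a but f a ≠ 1. -/
/-! A free group on at least two generators is centerless: given `z ≠ 1`, with at least four
letters available some letter `x` cancels neither against the first letter of the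
reduced word of `z` nor (as `x⁻¹`) against its last one, so `x z x⁻¹` has a reduced word two
letters longer than that of `z`. The image of `f` lies in the cyclic group generated by `a`, so
the values of `f` commute pairwise and `ρ` is `f.noncommCoprod f`. -/

namespace FreeGroup

variable {α : Type*}

theorem IsReduced.cons_append_singleton {x y : α × Bool} {L : List (α × Bool)}
    (hL : IsReduced L) (hne : L ≠ [])
    (hx : ∀ a ∈ L.head?, x.1 = a.1 → x.2 = a.2)
    (hy : ∀ b ∈ L.getLast?, b.1 = y.1 → b.2 = y.2) :
    IsReduced (x :: L ++ [y]) := by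
  refine List.isChain_append.2 ⟨List.isChain_cons.2 ⟨hx, hL⟩, .singleton _, ?_⟩
  simpa [List.getLast?_cons, List.getLast?_eq_some_getLast hne] using hy

theorem toWord_mk_mul_mul_inv [DecidableEq α] {x : α × Bool} {z : FreeGroup α} (hz : z ≠ 1)
    (hhead : ∀ a ∈ z.toWord.head?, x ≠ (a.1, !a.2))
    (hlast : ∀ b ∈ z.toWord.getLast?, b ≠ x) :
    (mk [x] * z * (mk [x])⁻¹).toWord = x :: z.toWord ++ [(x.1, !x.2)] := by
  have hred : IsReduced (x :: z.toWord ++ [(x.1, !x.2)]) := by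
    refine isReduced_toWord.cons_append_singleton (toWord_eq_nil_iff.not.2 hz) ?_ ?_
    · intro a ha h1
      by_contra h2
      exact hhead a ha (Prod.ext h1 (Bool.eq_not_iff.2 h2))
    · intro b hb h1
      by_contra h2
      exact hlast b hb (Prod.ext h1 (by simpa using Bool.eq_not_iff.2 h2))
  conv_lhs => rw [← mk_toWord (x := z)]
  rw [inv_mk, mul_mk, mul_mk, toWord_mk]
  exact hred.reduce_eq

theorem exists_letter_ne_ne [Nontrivial α] (p q : α × Bool) : ∃ x, x ≠ p ∧ x ≠ q := by
  obtain ⟨b, hb⟩ := exists_ne p.1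
  exact ⟨(b, !q.2), fun h => hb (congrArg Prod.fst h),
    fun h => by simpa using congrArg Prod.snd h⟩

theorem center_eq_bot [Nontrivial α] : Subgroup.center (FreeGroup α) = ⊥ := by
  classical
  refine eq_bot_iff.2 fun z hz => Subgroup.mem_bot.2 (by_contra fun hz1 => ?_)
  have hne : z.toWord ≠ [] := toWord_eq_nil_iff.not.2 hz1
  obtain ⟨x, hxh, hxl⟩ := exists_letter_ne_ne ((z.toWord.head hne).1, !(z.toWord.head hne).2)
    (z.toWord.getLast hne)
  have hword := toWord_mk_mul_mul_inv (x := x) hz1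
    (by simpa [List.head?_eq_some_head hne] using hxh)
    (by simpa [List.getLast?_eq_some_getLast hne] using hxl.symm)
  rw [Subgroup.mem_center_iff.1 hz, mul_inv_cancel_right] at hword
  have hlen := congrArg List.length hword
  simp only [List.length_append, List.length_cons] at hlen
  omega

theorem range_le_of_map_of_mem {G : Type*} [Group G] {H : Subgroup G} (f : FreeGroup α →* G)
    (h : ∀ a, f (of a) ∈ H) : f.range ≤ H := by
  rw [MonoidHom.range_eq_map, ← closure_range_of, MonoidHom.map_closure, Subgroup.closure_le]
  rintro _ ⟨_, ⟨a, rfl⟩, rfl⟩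
  exact h a

end FreeGroup

theorem Subgroup.commute_of_mem_zpowers {G : Type*} [Group G] {g a b : G}
    (ha : a ∈ Subgroup.zpowers g) (hb : b ∈ Subgroup.zpowers g) : Commute a b := by
  obtain ⟨m, rfl⟩ := ha
  obtain ⟨n, rfl⟩ := hb
  exact Commute.zpow_zpow_self g m n

/-- Let `F` be the free group on two generators `a = of true` and `b = of false`, and
let `f : F →* F` be the unique homomorphism with `f a = a` and `f b = a`. Then:
(1) `F` is centerless; (2) `ρ (u, v) = f u * f v` is a group homomorphism on `F × F`
witnessing that `f` Huq-commutes with itself; (3) `f` is not disjoint from itself: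
`f a = f a` but `f a ≠ 1`. -/
theorem centerless_groups_not_anticommutative
    (f : FreeGroup Bool →* FreeGroup Bool)
    (hfa : f (FreeGroup.of true) = FreeGroup.of true)
    (hfb : f (FreeGroup.of false) = FreeGroup.of true) :
    Subgroup.center (FreeGroup Bool) = ⊥ ∧
    (∃ ρ : FreeGroup Bool × FreeGroup Bool →* FreeGroup Bool,
      (∀ u v : FreeGroup Bool, ρ (u, v) = f u * f v) ∧
      (∀ u : FreeGroup Bool, ρ (u, 1) = f u ∧ ρ (1, u) = f u)) ∧
    (f (FreeGroup.of true) = f (FreeGroup.of true) ∧ f (FreeGroup.of true) ≠ 1) := by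
  have hrange : f.range ≤ Subgroup.zpowers (FreeGroup.of true) :=
    FreeGroup.range_le_of_map_of_mem f fun b => by
      cases b <;> simp [hfa, hfb, Subgroup.mem_zpowers]
  have hcomm : ∀ u v, Commute (f u) (f v) := fun u v =>
    Subgroup.commute_of_mem_zpowers (hrange ⟨u, rfl⟩) (hrange ⟨v, rfl⟩)
  refine ⟨FreeGroup.center_eq_bot,
    ⟨f.noncommCoprod f hcomm, fun _ _ => rfl, fun u => ⟨by simp, by simp⟩⟩,
    rfl, by rw [hfa]; exact FreeGroup.of_ne_one true⟩
end
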